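/- arXiv:1111.1312 — 7 statements merged into one kernel-verified Lean document; each statement's English description precedes it below -/
import Mathlib

section
/- Let G be a group generated by elements σ₁, …, σ_m (m ≥ 1) such that (σ_i σ_{i+1})² = 1 for all 1 ≤ i ≤ m−1, each σ_i has finite odd order, and σ_k = 1 for at least one index k. Then G is the trivial group. -/
/-!
A square root of `1` of odd order is `1`. Hence, if `σ i σ_{i+1}` is an involution, `σ i = 1` forces
`σ_{i+1}² = 1` and so `σ_{i+1} = 1`, and conversely. Triviality therefore spreads from `σ_k` along
the whole chain of generators, and `G` is generated by `1`.
-/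

theorem eq_one_of_sq_eq_one_of_odd_orderOf {G : Type*} [Monoid G] {x : G} (hx : x ^ 2 = 1)
    (hodd : Odd (orderOf x)) : x = 1 := by
  have hdvd : orderOf x ∣ 2 := orderOf_dvd_of_pow_eq_one hx
  rcases (Nat.dvd_prime Nat.prime_two).mp hdvd with h | h
  · exact orderOf_eq_one_iff.mp h
  · exact absurd (h ▸ hodd) (by decide)

theorem eq_one_iff_of_mul_sq_eq_one {G : Type*} [Group G] {x y : G} (hxy : (x * y) ^ 2 = 1)
    (hx : Odd (orderOf x)) (hy : Odd (orderOf y)) : x = 1 ↔ y = 1 := by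
  constructor
  · rintro rfl
    exact eq_one_of_sq_eq_one_of_odd_orderOf (by simpa using hxy) hy
  · rintro rfl
    exact eq_one_of_sq_eq_one_of_odd_orderOf (by simpa using hxy) hx

theorem Nat.iff_of_iff_succ {P : ℕ → Prop} {a b : ℕ}
    (h : ∀ i, a ≤ i → i < b → (P i ↔ P (i + 1))) {i j : ℕ} (hi : i ∈ Set.Icc a b)
    (hj : j ∈ Set.Icc a b) : P i ↔ P j := by
  have base : ∀ n, a ≤ n → n ≤ b → (P a ↔ P n) := by
    intro n han
    induction n, han using Nat.le_induction with
    | base => exact fun _ => Iff.rfl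
    | succ n han ih => exact fun hnb => (ih (by omega)).trans (h n han (by omega))
  exact (base i hi.1 hi.2).symm.trans (base j hj.1 hj.2)

theorem stmt_6_general (G : Type*) [Group G] (m : ℕ) (σ : ℕ → G)
    (hgen : Subgroup.closure (σ '' Set.Icc 1 m) = ⊤)
    (hrel : ∀ i : ℕ, 1 ≤ i → i ≤ m - 1 → (σ i * σ (i + 1)) ^ 2 = 1)
    (hodd : ∀ i : ℕ, 1 ≤ i → i ≤ m → IsOfFinOrder (σ i) ∧ Odd (orderOf (σ i)))
    (k : ℕ) (hk1 : 1 ≤ k) (hk2 : k ≤ m) (hk : σ k = 1) :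
    ∀ g : G, g = 1 := by
  have hall : ∀ i ∈ Set.Icc 1 m, σ i = 1 := fun i hi =>
    (Nat.iff_of_iff_succ (P := fun i => σ i = 1)
      (fun i hi1 him => eq_one_iff_of_mul_sq_eq_one (hrel i hi1 (by omega))
        (hodd i hi1 him.le).2 (hodd (i + 1) (by omega) him).2)
      ⟨hk1, hk2⟩ hi).mp hk
  have hbot : (⊤ : Subgroup G) = ⊥ := by
    rw [← hgen, Subgroup.closure_eq_bot_iff]
    rintro _ ⟨i, hi, rfl⟩
    exact hall i hi
  intro g
  simpa [hbot] using Subgroup.mem_top g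

/-- If `G` is generated by `σ_1, …, σ_m` with `(σ_i σ_{i+1})² = 1` for consecutive indices,
each `σ_i` of finite odd order, and `σ_k = 1` for some `k`, then `G` is trivial. -/
theorem stmt_6 (G : Type*) [Group G] (m : ℕ) (hm : 1 ≤ m) (σ : ℕ → G)
    (hgen : Subgroup.closure (σ '' Set.Icc 1 m) = ⊤)
    (hrel : ∀ i : ℕ, 1 ≤ i → i ≤ m - 1 → (σ i * σ (i + 1)) ^ 2 = 1)
    (hodd : ∀ i : ℕ, 1 ≤ i → i ≤ m → IsOfFinOrder (σ i) ∧ Odd (orderOf (σ i)))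
    (k : ℕ) (hk1 : 1 ≤ k) (hk2 : k ≤ m) (hk : σ k = 1) :
    ∀ g : G, g = 1 :=
  stmt_6_general G m σ hgen hrel hodd k hk1 hk2 hk
end

section
/- Let n ≥ 3, let Λ and Δ be groups, let σ₁, …, σ_{n−1} ∈ Λ and σ′₁, …, σ′_{n−1} ∈ Δ, and set β_k = (σ_k, σ′_k) ∈ Λ × Δ. Suppose ⟨σ₁, …, σ_{n−2}⟩ ⊓ ⟨σ₂, …, σ_{n−1}⟩ = ⟨σ₂, …, σ_{n−2}⟩ in Λ, and ⟨σ′₁, …, σ′_{n−2}⟩ ⊓ ⟨σ′₂, …, σ′_{n−1}⟩ = ⟨σ′₂, …, σ′_{n−2}⟩ in Δ. If ⟨β₂, …, β_{n−2}⟩ = ⟨σ₂, …, σ_{n−2}⟩ × ⟨σ′₂, …, σ′_{n−2}⟩ (product subgroup of Λ × Δ), then ⟨β₁, …, β_{n−2}⟩ ⊓ ⟨β₂, …, β_{n−1}⟩ = ⟨β₂, …, β_{n−2}⟩. (Subgroups generated by an empty list of elements are the trivial subgroup.) -/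
/-! A subgroup generated by pairs lies in the product of the subgroups generated by the
coordinates, so the intersection of the two `β`-subgroups lies in the product of the coordinatewise
intersections, i.e. of the two medial subgroups, which is `⟨β₂, …, β_{n-2}⟩` by assumption. -/

namespace Subgroup

variable {G N : Type*} [Group G] [Group N]

theorem prod_inf_prod (H₁ H₂ : Subgroup G) (K₁ K₂ : Subgroup N) :
    H₁.prod K₁ ⊓ H₂.prod K₂ = (H₁ ⊓ H₂).prod (K₁ ⊓ K₂) := by
  ext x
  simp only [mem_inf, mem_prod]
  tauto

theorem closure_image_pair_le_prod {ι : Type*} (σ : ι → G) (σ' : ι → N) (S : Set ι) :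
    closure ((fun k ↦ (σ k, σ' k)) '' S) ≤ (closure (σ '' S)).prod (closure (σ' '' S)) := by
  rw [closure_le]
  rintro _ ⟨k, hk, rfl⟩
  exact ⟨subset_closure ⟨k, hk, rfl⟩, subset_closure ⟨k, hk, rfl⟩⟩

end Subgroup

open Subgroup in
theorem stmt_10_general (Λ Δ : Type*) [Group Λ] [Group Δ] (n : ℕ)
    (σ : ℕ → Λ) (σ' : ℕ → Δ) (β : ℕ → Λ × Δ) (hβ : ∀ k, β k = (σ k, σ' k))
    (hΛ : Subgroup.closure (σ '' Set.Icc 1 (n - 2)) ⊓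
          Subgroup.closure (σ '' Set.Icc 2 (n - 1)) =
        Subgroup.closure (σ '' Set.Icc 2 (n - 2)))
    (hΔ : Subgroup.closure (σ' '' Set.Icc 1 (n - 2)) ⊓
          Subgroup.closure (σ' '' Set.Icc 2 (n - 1)) =
        Subgroup.closure (σ' '' Set.Icc 2 (n - 2)))
    (hmid : Subgroup.closure (β '' Set.Icc 2 (n - 2)) =
        (Subgroup.closure (σ '' Set.Icc 2 (n - 2))).prod
          (Subgroup.closure (σ' '' Set.Icc 2 (n - 2)))) :
    Subgroup.closure (β '' Set.Icc 1 (n - 2)) ⊓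
      Subgroup.closure (β '' Set.Icc 2 (n - 1)) =
      Subgroup.closure (β '' Set.Icc 2 (n - 2)) := by
  obtain rfl : β = fun k ↦ (σ k, σ' k) := funext hβ
  refine le_antisymm ?_ ?_
  · calc _ ≤ (closure (σ '' Set.Icc 1 (n - 2))).prod (closure (σ' '' Set.Icc 1 (n - 2))) ⊓
            (closure (σ '' Set.Icc 2 (n - 1))).prod (closure (σ' '' Set.Icc 2 (n - 1))) :=
          inf_le_inf (closure_image_pair_le_prod ..) (closure_image_pair_le_prod ..)
      _ = _ := by rw [prod_inf_prod, hΛ, hΔ, hmid]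
  · exact le_inf (closure_mono (Set.image_mono (Set.Icc_subset_Icc_left (by omega))))
      (closure_mono (Set.image_mono (Set.Icc_subset_Icc_right (by omega))))

/-- If `⟨σ₁,…,σ_{n-2}⟩ ⊓ ⟨σ₂,…,σ_{n-1}⟩ = ⟨σ₂,…,σ_{n-2}⟩` in `Λ`, likewise for the `σ'` in
`Δ`, and `⟨β₂,…,β_{n-2}⟩` is the product subgroup `⟨σ₂,…,σ_{n-2}⟩ × ⟨σ'₂,…,σ'_{n-2}⟩`, then
`⟨β₁,…,β_{n-2}⟩ ⊓ ⟨β₂,…,β_{n-1}⟩ = ⟨β₂,…,β_{n-2}⟩`, where `β_k = (σ_k, σ'_k)`. -/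
theorem stmt_10 (Λ Δ : Type*) [Group Λ] [Group Δ] (n : ℕ) (hn : 3 ≤ n)
    (σ : ℕ → Λ) (σ' : ℕ → Δ) (β : ℕ → Λ × Δ) (hβ : ∀ k, β k = (σ k, σ' k))
    (hΛ : Subgroup.closure (σ '' Set.Icc 1 (n - 2)) ⊓
          Subgroup.closure (σ '' Set.Icc 2 (n - 1)) =
        Subgroup.closure (σ '' Set.Icc 2 (n - 2)))
    (hΔ : Subgroup.closure (σ' '' Set.Icc 1 (n - 2)) ⊓
          Subgroup.closure (σ' '' Set.Icc 2 (n - 1)) =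
        Subgroup.closure (σ' '' Set.Icc 2 (n - 2)))
    (hmid : Subgroup.closure (β '' Set.Icc 2 (n - 2)) =
        (Subgroup.closure (σ '' Set.Icc 2 (n - 2))).prod
          (Subgroup.closure (σ' '' Set.Icc 2 (n - 2)))) :
    Subgroup.closure (β '' Set.Icc 1 (n - 2)) ⊓
      Subgroup.closure (β '' Set.Icc 2 (n - 1)) =
      Subgroup.closure (β '' Set.Icc 2 (n - 2)) :=
  stmt_10_general Λ Δ n σ σ' β hβ hΛ hΔ hmid
end

section
/- Let n ≥ 3, let Λ and Δ be groups, let σ₁, …, σ_{n−1} ∈ Λ and σ′₁, …, σ′_{n−1} ∈ Δ, and set β_k = (σ_k, σ′_k) ∈ Λ × Δ. Suppose ⟨σ₁, …, σ_{n−2}⟩ ⊓ ⟨σ₂, …, σ_{n−1}⟩ = ⟨σ₂, …, σ_{n−2}⟩ in Λ, and ⟨σ′₁, …, σ′_{n−2}⟩ ⊓ ⟨σ′₂, …, σ′_{n−1}⟩ = ⟨σ′₂, …, σ′_{n−2}⟩ in Δ. Suppose further that ⟨β₁, …, β_{n−2}⟩ = ⟨σ₁, …, σ_{n−2}⟩ ×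 ⟨σ′₁, …, σ′_{n−2}⟩ and ⟨β₂, …, β_{n−1}⟩ = ⟨σ₂, …, σ_{n−1}⟩ × ⟨σ′₂, …, σ′_{n−1}⟩ (product subgroups of Λ × Δ). Then ⟨β₁, …, β_{n−2}⟩ ⊓ ⟨β₂, …, β_{n−1}⟩ = ⟨β₂, …, β_{n−2}⟩ if and only if ⟨β₂, …, β_{n−2}⟩ = ⟨σ₂, …, σ_{n−2}⟩ × ⟨σ′₂, …, σ′_{n−2}⟩. (Subgroups generated by an empty list of elements are the trivial subgroup.) -/
theorem Subgroup.prod_inf_prod_s11 {G H : Type*} [Group G] [Group H]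
    (A₁ A₂ : Subgroup G) (B₁ B₂ : Subgroup H) :
    A₁.prod B₁ ⊓ A₂.prod B₂ = (A₁ ⊓ A₂).prod (B₁ ⊓ B₂) :=
  SetLike.coe_injective Set.prod_inter_prod

theorem stmt_11_general (Λ Δ : Type*) [Group Λ] [Group Δ] (n : ℕ)
    (σ : ℕ → Λ) (σ' : ℕ → Δ) (β : ℕ → Λ × Δ)
    (hΛ : Subgroup.closure (σ '' Set.Icc 1 (n - 2)) ⊓
          Subgroup.closure (σ '' Set.Icc 2 (n - 1)) =
        Subgroup.closure (σ '' Set.Icc 2 (n - 2)))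
    (hΔ : Subgroup.closure (σ' '' Set.Icc 1 (n - 2)) ⊓
          Subgroup.closure (σ' '' Set.Icc 2 (n - 1)) =
        Subgroup.closure (σ' '' Set.Icc 2 (n - 2)))
    (hfac : Subgroup.closure (β '' Set.Icc 1 (n - 2)) =
        (Subgroup.closure (σ '' Set.Icc 1 (n - 2))).prod
          (Subgroup.closure (σ' '' Set.Icc 1 (n - 2))))
    (hvf : Subgroup.closure (β '' Set.Icc 2 (n - 1)) =
        (Subgroup.closure (σ '' Set.Icc 2 (n - 1))).prod
          (Subgroup.closure (σ' '' Set.Icc 2 (n - 1)))) :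
    (Subgroup.closure (β '' Set.Icc 1 (n - 2)) ⊓
        Subgroup.closure (β '' Set.Icc 2 (n - 1)) =
        Subgroup.closure (β '' Set.Icc 2 (n - 2))) ↔
      Subgroup.closure (β '' Set.Icc 2 (n - 2)) =
        (Subgroup.closure (σ '' Set.Icc 2 (n - 2))).prod
          (Subgroup.closure (σ' '' Set.Icc 2 (n - 2))) := by
  rw [hfac, hvf, Subgroup.prod_inf_prod_s11, hΛ, hΔ, eq_comm]

/-- If `⟨σ₁,…,σ_{n-2}⟩ ⊓ ⟨σ₂,…,σ_{n-1}⟩ = ⟨σ₂,…,σ_{n-2}⟩` in `Λ`, likewise for the `σ'` in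
`Δ`, and `⟨β₁,…,β_{n-2}⟩` and `⟨β₂,…,β_{n-1}⟩` are the product subgroups of the corresponding
subgroups of `Λ` and `Δ`, then `⟨β₁,…,β_{n-2}⟩ ⊓ ⟨β₂,…,β_{n-1}⟩ = ⟨β₂,…,β_{n-2}⟩` if and
only if `⟨β₂,…,β_{n-2}⟩ = ⟨σ₂,…,σ_{n-2}⟩ × ⟨σ'₂,…,σ'_{n-2}⟩`. -/
theorem stmt_11 (Λ Δ : Type*) [Group Λ] [Group Δ] (n : ℕ) (hn : 3 ≤ n)
    (σ : ℕ → Λ) (σ' : ℕ → Δ) (β : ℕ → Λ × Δ) (hβ : ∀ k, β k = (σ k, σ' k))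
    (hΛ : Subgroup.closure (σ '' Set.Icc 1 (n - 2)) ⊓
          Subgroup.closure (σ '' Set.Icc 2 (n - 1)) =
        Subgroup.closure (σ '' Set.Icc 2 (n - 2)))
    (hΔ : Subgroup.closure (σ' '' Set.Icc 1 (n - 2)) ⊓
          Subgroup.closure (σ' '' Set.Icc 2 (n - 1)) =
        Subgroup.closure (σ' '' Set.Icc 2 (n - 2)))
    (hfac : Subgroup.closure (β '' Set.Icc 1 (n - 2)) =
        (Subgroup.closure (σ '' Set.Icc 1 (n - 2))).prod
          (Subgroup.closure (σ' '' Set.Icc 1 (n - 2))))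
    (hvf : Subgroup.closure (β '' Set.Icc 2 (n - 1)) =
        (Subgroup.closure (σ '' Set.Icc 2 (n - 1))).prod
          (Subgroup.closure (σ' '' Set.Icc 2 (n - 1)))) :
    (Subgroup.closure (β '' Set.Icc 1 (n - 2)) ⊓
        Subgroup.closure (β '' Set.Icc 2 (n - 1)) =
        Subgroup.closure (β '' Set.Icc 2 (n - 2))) ↔
      Subgroup.closure (β '' Set.Icc 2 (n - 2)) =
        (Subgroup.closure (σ '' Set.Icc 2 (n - 2))).prod
          (Subgroup.closure (σ' '' Set.Icc 2 (n - 2))) :=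
  stmt_11_general Λ Δ n σ σ' β hΛ hΔ hfac hvf
end

section
/- Let n ≥ 3. Let W_T be the Coxeter group on generators s₁, …, s_n of the string Coxeter diagram with all consecutive edge labels equal to 3 (Coxeter matrix with m(i,i+1) = 3 for 1 ≤ i ≤ n−1 and m(i,j) = 2 for |i−j| ≥ 2), and let W_B be the Coxeter group on generators s′₁, …, s′_n of the string diagram with consecutive edge labels 4, 3, …, 3 (m(1,2) = 4, m(i,i+1) = 3 for 2 ≤ i ≤ n−1, m(i,j) = 2 for |i−j| ≥ 2). Set σ_i = s_i s_{i+1} in W_T and σ′_i = s′_i s′_{i+1} in W_B for i = 1, …, n−1. Then the subgroup of W_T × W_B generated by the pairs (σ_i, σ′_i), i = 1, …, n−1, equals the product subgroup ⟨σ₁, …, σ_{n−1}⟩ × ⟨σ′₁, …, σ′_{n−1}⟩. -/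
/-!
Write `K` for the mix. Since `σ₁` has order 3 and `σ′₁` has order 4, the cube of the generator
`(σ₁, σ′₁)` is `(1, σ′₁⁻¹)`, so `K` contains `(1, σ′₁)` and hence `(σ₁, 1)`. Inductively, if
`(σ_k, 1) ∈ K`, then `K` contains `(σ_k σ_{k+1}, σ′_{k+1}) = (s_k s_{k+2}, σ′_{k+1})`, whose first
entry has order 2 and whose second has order 3; its square is `(1, σ′_{k+1}⁻¹)`, so `K` contains
`(1, σ′_{k+1})` and `(σ_{k+1}, 1)`. Thus `K` contains both factors of the product.
-/

namespace Subgroup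

variable {G H : Type*} [Group G] [Group H] {K : Subgroup (G × H)}

theorem mk_one_mem_iff_one_mk_mem {x : G} {y : H} (hxy : (x, y) ∈ K) :
    (x, (1 : H)) ∈ K ↔ ((1 : G), y) ∈ K := by
  constructor
  · intro hx
    simpa using K.mul_mem (K.inv_mem hx) hxy
  · intro hy
    simpa using K.mul_mem hxy (K.inv_mem hy)

theorem one_mk_mem_of_pow_eq_one {x : G} {y : H} {m : ℕ} (hxy : (x, y) ∈ K)
    (hx : x ^ m = 1) (hy : y ^ (m + 1) = 1) : ((1 : G), y) ∈ K := by
  have hym : y ^ m = y⁻¹ := eq_inv_of_mul_eq_one_left (by rwa [← pow_succ])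
  have hpow : (x, y) ^ m = ((1 : G), y⁻¹) := by rw [Prod.pow_mk, hx, hym]
  have hmem := K.pow_mem hxy m
  rw [hpow] at hmem
  simpa using K.inv_mem hmem

theorem prod_closure_le {s : Set G} {t : Set H} (hs : ∀ x ∈ s, (x, (1 : H)) ∈ K)
    (ht : ∀ y ∈ t, ((1 : G), y) ∈ K) : (closure s).prod (closure t) ≤ K := by
  rw [prod_le_iff, map_le_iff_le_comap, map_le_iff_le_comap, closure_le, closure_le]
  exact ⟨hs, ht⟩

end Subgroup

namespace CoxeterMatrix

variable {n : ℕ}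

def rotationSubgroup (M : CoxeterMatrix (Fin n)) : Subgroup M.Group :=
  Subgroup.closure {x | ∃ i j : Fin n, (j : ℕ) = (i : ℕ) + 1 ∧ x = M.simple i * M.simple j}

def rotationMix (MT MB : CoxeterMatrix (Fin n)) : Subgroup (MT.Group × MB.Group) :=
  Subgroup.closure {p | ∃ i j : Fin n, (j : ℕ) = (i : ℕ) + 1 ∧
    p = (MT.simple i * MT.simple j, MB.simple i * MB.simple j)}

theorem rotationMix_le_prod (MT MB : CoxeterMatrix (Fin n)) :
    rotationMix MT MB ≤ MT.rotationSubgroup.prod MB.rotationSubgroup := by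
  rw [rotationMix, Subgroup.closure_le]
  rintro _ ⟨i, j, hij, rfl⟩
  exact ⟨Subgroup.subset_closure ⟨i, j, hij, rfl⟩, Subgroup.subset_closure ⟨i, j, hij, rfl⟩⟩

theorem simple_mul_simple_pow_of_eq (M : CoxeterMatrix (Fin n)) {i j : Fin n} {m : ℕ}
    (h : M.M i j = m) : (M.simple i * M.simple j) ^ m = 1 :=
  h ▸ M.toCoxeterSystem.simple_mul_simple_pow i j

theorem simple_mul_simple_mul_simple_mul_simple (M : CoxeterMatrix (Fin n)) (i j k : Fin n) :
    M.simple i * M.simple j * (M.simple j * M.simple k) = M.simple i * M.simple k := by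
  rw [mul_assoc]
  exact congrArg _ (M.toCoxeterSystem.simple_mul_simple_cancel_left j)

theorem mk_simple_mul_simple_mem_rotationMix (MT MB : CoxeterMatrix (Fin n)) {i j : Fin n} (hij : (j : ℕ) = (i : ℕ) + 1) :
    (MT.simple i * MT.simple j, MB.simple i * MB.simple j) ∈ rotationMix MT MB :=
  Subgroup.subset_closure ⟨i, j, hij, rfl⟩

variable {MT MB : CoxeterMatrix (Fin n)}

theorem rotation_one_mem_rotationMix
    (hT₀ : ∀ i j : Fin n, (i : ℕ) = 0 → (j : ℕ) = 1 → MT.M i j = 3)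
    (hT₂ : ∀ i j : Fin n, (j : ℕ) = (i : ℕ) + 2 → MT.M i j = 2)
    (hB₀ : ∀ i j : Fin n, (i : ℕ) = 0 → (j : ℕ) = 1 → MB.M i j = 4)
    (hB : ∀ i j : Fin n, 0 < (i : ℕ) → (j : ℕ) = (i : ℕ) + 1 → MB.M i j = 3) :
    ∀ (k : ℕ) (i j : Fin n), (i : ℕ) = k → (j : ℕ) = k + 1 →
      (MT.simple i * MT.simple j, (1 : MB.Group)) ∈ rotationMix MT MB := by
  intro k
  induction k with
  | zero =>
    intro i j hi hj
    have hgen := mk_simple_mul_simple_mem_rotationMix MT MB (show (j : ℕ) = i + 1 by omega)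
    exact (Subgroup.mk_one_mem_iff_one_mk_mem hgen).2 <|
      Subgroup.one_mk_mem_of_pow_eq_one hgen
        (MT.simple_mul_simple_pow_of_eq (hT₀ i j hi hj))
        (MB.simple_mul_simple_pow_of_eq (hB₀ i j hi hj))
  | succ k ih =>
    intro i j hi hj
    let h : Fin n := ⟨k, by omega⟩
    have hgen := mk_simple_mul_simple_mem_rotationMix MT MB (show (j : ℕ) = i + 1 by omega)
    have hprod : (MT.simple h * MT.simple j, MB.simple i * MB.simple j) ∈ rotationMix MT MB := by
      simpa only [Prod.mk_mul_mk, one_mul, simple_mul_simple_mul_simple_mul_simple] using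
        (rotationMix MT MB).mul_mem (ih h i rfl hi) hgen
    exact (Subgroup.mk_one_mem_iff_one_mk_mem hgen).2 <|
      Subgroup.one_mk_mem_of_pow_eq_one hprod
        (MT.simple_mul_simple_pow_of_eq (hT₂ h j (by simp [h]; omega)))
        (MB.simple_mul_simple_pow_of_eq (hB i j (by omega) (by omega)))

end CoxeterMatrix

theorem stmt_12_general (n : ℕ)
    (MT MB : CoxeterMatrix (Fin n))
    (hMT : ∀ i j : Fin n, MT.M i j =
      if i = j then 1
      else if (i : ℕ) + 1 = (j : ℕ) ∨ (j : ℕ) + 1 = (i : ℕ) then 3 else 2)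
    (hMB : ∀ i j : Fin n, MB.M i j =
      if i = j then 1
      else if (i : ℕ) + 1 = (j : ℕ) ∨ (j : ℕ) + 1 = (i : ℕ) then
        (if (i : ℕ) = 0 ∨ (j : ℕ) = 0 then 4 else 3)
      else 2) :
    Subgroup.closure
        {p : MT.Group × MB.Group |
          ∃ i j : Fin n, (j : ℕ) = (i : ℕ) + 1 ∧
            p = (MT.simple i * MT.simple j, MB.simple i * MB.simple j)} =
      (Subgroup.closure
          {x : MT.Group |
            ∃ i j : Fin n, (j : ℕ) = (i : ℕ) + 1 ∧ x = MT.simple i * MT.simple j}).prod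
        (Subgroup.closure
          {x : MB.Group |
            ∃ i j : Fin n, (j : ℕ) = (i : ℕ) + 1 ∧ x = MB.simple i * MB.simple j}) := by
  have hσT := CoxeterMatrix.rotation_one_mem_rotationMix (MT := MT) (MB := MB)
    (fun i j hi hj => by rw [hMT, if_neg (by omega), if_pos (by omega)])
    (fun i j hj => by rw [hMT, if_neg (by omega), if_neg (by omega)])
    (fun i j hi hj => by rw [hMB, if_neg (by omega), if_pos (by omega), if_pos (by omega)])
    (fun i j hi hj => by rw [hMB, if_neg (by omega), if_pos (by omega), if_neg (by omega)])
  refine le_antisymm (CoxeterMatrix.rotationMix_le_prod MT MB) (Subgroup.prod_closure_le ?_ ?_)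
  · rintro _ ⟨i, j, hij, rfl⟩
    exact hσT i i j rfl hij
  · rintro _ ⟨i, j, hij, rfl⟩
    exact (Subgroup.mk_one_mem_iff_one_mk_mem
      (CoxeterMatrix.mk_simple_mul_simple_mem_rotationMix MT MB hij)).1 (hσT i i j rfl hij)

/-- For `n ≥ 3`, the subgroup of `W_T × W_B` (simplex and cube Coxeter groups) generated by
the pairs `(σ_i, σ'_i)` of abstract rotations equals the product of the rotation subgroups. -/
theorem stmt_12 (n : ℕ) (hn : 3 ≤ n)
    (MT MB : CoxeterMatrix (Fin n))
    (hMT : ∀ i j : Fin n, MT.M i j =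
      if i = j then 1
      else if (i : ℕ) + 1 = (j : ℕ) ∨ (j : ℕ) + 1 = (i : ℕ) then 3 else 2)
    (hMB : ∀ i j : Fin n, MB.M i j =
      if i = j then 1
      else if (i : ℕ) + 1 = (j : ℕ) ∨ (j : ℕ) + 1 = (i : ℕ) then
        (if (i : ℕ) = 0 ∨ (j : ℕ) = 0 then 4 else 3)
      else 2) :
    Subgroup.closure
        {p : MT.Group × MB.Group |
          ∃ i j : Fin n, (j : ℕ) = (i : ℕ) + 1 ∧
            p = (MT.simple i * MT.simple j, MB.simple i * MB.simple j)} =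
      (Subgroup.closure
          {x : MT.Group |
            ∃ i j : Fin n, (j : ℕ) = (i : ℕ) + 1 ∧ x = MT.simple i * MT.simple j}).prod
        (Subgroup.closure
          {x : MB.Group |
            ∃ i j : Fin n, (j : ℕ) = (i : ℕ) + 1 ∧ x = MB.simple i * MB.simple j}) :=
  stmt_12_general n MT MB hMT hMB
end

section
/- Let n ≥ 3. Let W_T be the Coxeter group on generators s₁, …, s_n of the string Coxeter diagram with all consecutive edge labels equal to 3, and let W_C be the Coxeter group on generators s″₁, …, s″_n of the string diagram with consecutive edge labels 3, …, 3, 4 (m(i,i+1) = 3 for 1 ≤ i ≤ n−2, m(n−1,n) = 4, m(i,j) = 2 for |i−j| ≥ 2). Set σ_i = s_i s_{i+1} in W_T and σ″_i = s″_i s″_{i+1} in W_C for i = 1, …, n−1. Then the subgroup of W_T × W_C generated by the pairs (σ_i, σ″_i), i = 1, …, n−1, equals the product subgroup ⟨σ₁, …, σ_{n−1}⟩ × ⟨σ″₁, …, σ″_{n−1}⟩. -/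
/-!
If `(a, b)` lies in a subgroup of `G × K` and `a ^ p = 1`, `b ^ q = 1` with `p`, `q` coprime, then
a suitable power of `(a, b)` is `(a, 1)`, so the subgroup contains `(a, 1)` and `(1, b)`.
In the mix, `(σ_{n-1}, σ''_{n-1})` has coordinates of orders dividing 3 and 4, which gives
`(1, σ''_{n-1})`. Descending, `(σ_i, σ''_i) (1, σ''_{i+1}) = (σ_i, s''_i s''_{i+2})` has coordinates
of orders dividing 3 and 2, since `s''_i` and `s''_{i+2}` commute; this splits off `(σ_i, 1)` and
then `(1, σ''_i)`. Hence the mix contains both factors of the product.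
-/

namespace Subgroup

variable {G K : Type*} [Group G] [Group K] {H : Subgroup (G × K)}

theorem mk_one_mem_and_one_mk_mem_of_coprime {a : G} {b : K} {p q : ℕ} (hab : (a, b) ∈ H)
    (ha : a ^ p = 1) (hb : b ^ q = 1) (hpq : p.Coprime q) : (a, 1) ∈ H ∧ (1, b) ∈ H := by
  obtain ⟨k, hk⟩ :=
    exists_pow_eq_self_of_coprime (hpq.symm.coprime_dvd_right (orderOf_dvd_of_pow_eq_one ha))
  have ha1 : (a, (1 : K)) ∈ H := by
    simpa [hk, hb] using H.pow_mem (H.pow_mem hab q) k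
  refine ⟨ha1, ?_⟩
  simpa using H.mul_mem (H.inv_mem ha1) hab

theorem mk_one_mem_and_one_mk_mem_of_chain {a : ℕ → G} {b : ℕ → K} {m p q r : ℕ}
    (hmem : ∀ i < m, (a i, b i) ∈ H) (ha : ∀ i < m, a i ^ p = 1)
    (hlast : ∀ i, i + 1 = m → b i ^ q = 1)
    (hchain : ∀ i, i + 1 < m → (b i * b (i + 1)) ^ r = 1)
    (hpq : p.Coprime q) (hpr : p.Coprime r) {i : ℕ} (hi : i < m) :
    (a i, 1) ∈ H ∧ (1, b i) ∈ H := by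
  induction (Nat.le_sub_one_of_lt hi) using Nat.decreasingInduction with
  | self =>
    exact mk_one_mem_and_one_mk_mem_of_coprime (hmem _ (by omega)) (ha _ (by omega))
      (hlast _ (by omega)) hpq
  | of_succ k hk ih =>
    have hprod : (a k, b k * b (k + 1)) ∈ H := by
      simpa using H.mul_mem (hmem k (by omega)) (ih (by omega)).2
    have hak := (mk_one_mem_and_one_mk_mem_of_coprime hprod (ha k (by omega))
      (hchain k (by omega)) hpr).1
    exact ⟨hak, by simpa using H.mul_mem (H.inv_mem hak) (hmem k (by omega))⟩

end Subgroup

namespace CoxeterMatrix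

variable {n : ℕ} (M : CoxeterMatrix (Fin n))

/-- The rotation `σ_{i+1} = s_{i+1} s_{i+2}` in the paper's 1-based indexing; junk value `1` when
`i + 1 ≥ n`. -/
def rotation (i : ℕ) : M.Group :=
  if h : i + 1 < n then M.simple ⟨i, by omega⟩ * M.simple ⟨i + 1, h⟩ else 1

theorem rotation_of_lt {i : ℕ} (h : i + 1 < n) :
    M.rotation i = M.simple ⟨i, by omega⟩ * M.simple ⟨i + 1, h⟩ :=
  dif_pos h

theorem simple_mul_simple_eq_rotation {i j : Fin n} (hij : (j : ℕ) = i + 1) :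
    M.simple i * M.simple j = M.rotation i := by
  obtain ⟨j, hj⟩ := j
  subst hij
  rw [rotation_of_lt M hj]

theorem rotation_pow {i : ℕ} (h : i + 1 < n) : M.rotation i ^ M ⟨i, by omega⟩ ⟨i + 1, h⟩ = 1 := by
  simpa [rotation_of_lt M h] using M.toCoxeterSystem.simple_mul_simple_pow _ _

theorem rotation_mul_rotation_succ {i : ℕ} (h : i + 2 < n) :
    M.rotation i * M.rotation (i + 1) = M.simple ⟨i, by omega⟩ * M.simple ⟨i + 2, h⟩ := by
  rw [rotation_of_lt M (i := i) (by omega), rotation_of_lt M h, mul_assoc,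
    ← M.toCoxeterSystem_simple, CoxeterSystem.simple_mul_simple_cancel_left]

theorem rotation_mul_rotation_succ_pow {i : ℕ} (h : i + 2 < n) :
    (M.rotation i * M.rotation (i + 1)) ^ M ⟨i, by omega⟩ ⟨i + 2, h⟩ = 1 := by
  simpa [rotation_mul_rotation_succ M h] using M.toCoxeterSystem.simple_mul_simple_pow _ _

end CoxeterMatrix

theorem stmt_13_general (n : ℕ)
    (MT MC : CoxeterMatrix (Fin n))
    (hMT : ∀ i j : Fin n, MT.M i j =
      if i = j then 1
      else if (i : ℕ) + 1 = (j : ℕ) ∨ (j : ℕ) + 1 = (i : ℕ) then 3 else 2)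
    (hMC : ∀ i j : Fin n, MC.M i j =
      if i = j then 1
      else if (i : ℕ) + 1 = (j : ℕ) ∨ (j : ℕ) + 1 = (i : ℕ) then
        (if (i : ℕ) = n - 1 ∨ (j : ℕ) = n - 1 then 4 else 3)
      else 2) :
    Subgroup.closure
        {p : MT.Group × MC.Group |
          ∃ i j : Fin n, (j : ℕ) = (i : ℕ) + 1 ∧
            p = (MT.simple i * MT.simple j, MC.simple i * MC.simple j)} =
      (Subgroup.closure
          {x : MT.Group |
            ∃ i j : Fin n, (j : ℕ) = (i : ℕ) + 1 ∧ x = MT.simple i * MT.simple j}).prod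
        (Subgroup.closure
          {x : MC.Group |
            ∃ i j : Fin n, (j : ℕ) = (i : ℕ) + 1 ∧ x = MC.simple i * MC.simple j}) := by
  set H := Subgroup.closure {p : MT.Group × MC.Group | ∃ i j : Fin n, (j : ℕ) = (i : ℕ) + 1 ∧
    p = (MT.simple i * MT.simple j, MC.simple i * MC.simple j)}
  have hmem : ∀ i < n - 1, (MT.rotation i, MC.rotation i) ∈ H := fun i hi =>
    Subgroup.subset_closure ⟨⟨i, by omega⟩, ⟨i + 1, by omega⟩, rfl, by
      rw [MT.simple_mul_simple_eq_rotation rfl, MC.simple_mul_simple_eq_rotation rfl]⟩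
  have hT : ∀ i < n - 1, MT.rotation i ^ 3 = 1 := fun i hi => by
    simpa [hMT, Fin.ext_iff] using MT.rotation_pow (i := i) (by omega)
  have hC : ∀ i, i + 1 = n - 1 → MC.rotation i ^ 4 = 1 := fun i hi => by
    simpa [hMC, hi, show i ≠ n - 1 by omega] using MC.rotation_pow (i := i) (by omega)
  have hCC : ∀ i, i + 1 < n - 1 → (MC.rotation i * MC.rotation (i + 1)) ^ 2 = 1 := fun i hi => by
    simpa [hMC, Fin.ext_iff, show i + 2 + 1 ≠ i by omega] using
      MC.rotation_mul_rotation_succ_pow (i := i) (by omega)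
  have hsplit {i : ℕ} (hi : i < n - 1) :=
    Subgroup.mk_one_mem_and_one_mk_mem_of_chain hmem hT hC hCC (by norm_num) (by norm_num) hi
  refine le_antisymm ?_ ?_
  · rw [Subgroup.closure_le]
    rintro _ ⟨i, j, hij, rfl⟩
    exact ⟨Subgroup.subset_closure ⟨i, j, hij, rfl⟩, Subgroup.subset_closure ⟨i, j, hij, rfl⟩⟩
  · rw [Subgroup.prod_le_iff, Subgroup.map_le_iff_le_comap, Subgroup.map_le_iff_le_comap,
      Subgroup.closure_le, Subgroup.closure_le]
    constructor <;> rintro _ ⟨i, j, hij, rfl⟩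
    · simpa [MT.simple_mul_simple_eq_rotation hij] using (hsplit (i := i) (by omega)).1
    · simpa [MC.simple_mul_simple_eq_rotation hij] using (hsplit (i := i) (by omega)).2

/-- For `n ≥ 3`, the subgroup of `W_T × W_C` (simplex and cross-polytope Coxeter groups)
generated by the pairs `(σ_i, σ''_i)` of abstract rotations equals the product of the
rotation subgroups. -/
theorem stmt_13 (n : ℕ) (hn : 3 ≤ n)
    (MT MC : CoxeterMatrix (Fin n))
    (hMT : ∀ i j : Fin n, MT.M i j =
      if i = j then 1
      else if (i : ℕ) + 1 = (j : ℕ) ∨ (j : ℕ) + 1 = (i : ℕ) then 3 else 2)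
    (hMC : ∀ i j : Fin n, MC.M i j =
      if i = j then 1
      else if (i : ℕ) + 1 = (j : ℕ) ∨ (j : ℕ) + 1 = (i : ℕ) then
        (if (i : ℕ) = n - 1 ∨ (j : ℕ) = n - 1 then 4 else 3)
      else 2) :
    Subgroup.closure
        {p : MT.Group × MC.Group |
          ∃ i j : Fin n, (j : ℕ) = (i : ℕ) + 1 ∧
            p = (MT.simple i * MT.simple j, MC.simple i * MC.simple j)} =
      (Subgroup.closure
          {x : MT.Group |
            ∃ i j : Fin n, (j : ℕ) = (i : ℕ) + 1 ∧ x = MT.simple i * MT.simple j}).prod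
        (Subgroup.closure
          {x : MC.Group |
            ∃ i j : Fin n, (j : ℕ) = (i : ℕ) + 1 ∧ x = MC.simple i * MC.simple j}) :=
  stmt_13_general n MT MC hMT hMC
end

section
/- Let n ≥ 3. Let W_B be the Coxeter group on generators s′₁, …, s′_n of the string Coxeter diagram with consecutive edge labels 4, 3, …, 3 (m(1,2) = 4, m(i,i+1) = 3 for 2 ≤ i ≤ n−1, m(i,j) = 2 for |i−j| ≥ 2), and let W_C be the Coxeter group on generators s″₁, …, s″_n of the string diagram with consecutive edge labels 3, …, 3, 4 (m(i,i+1) = 3 for 1 ≤ i ≤ n−2, m(n−1,n) = 4, m(i,j) = 2 for |i−j| ≥ 2). Set σ′_i = s′_i s′_{i+1} in W_B and σ″_i = s″_i s″_{i+1} in W_C for i = 1, …, n−1. Then the subgroup of W_B × W_C generated by the pairs (σ′_i, σ″_i), i = 1, …, n−1, equals the product subgroup ⟨σ′₁, …, σ′_{n−1}⟩ × ⟨σ″₁, …, σ″_{n−1}⟩. -/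
/-!
Let `H` be the subgroup generated by the pairs `(σ'_i, σ''_i)`. As `σ'_1 ^ 4 = 1` and
`σ''_1 ^ 3 = 1`, a suitable power of `(σ'_1, σ''_1)` is `(σ'_1, 1)`, which therefore lies in `H`.
Away from the first node the diagram of `W_B` has labels 3 and 2, and there consecutive rotations
satisfy `σ_i (σ_{i+1} σ_i σ_{i+1}⁻¹) = σ_{i+1}`; so multiplying `(σ'_i, 1)` by its conjugate under
`(σ'_{i+1}, σ''_{i+1})` gives `(σ'_{i+1}, 1) ∈ H`. Dividing the generators by these elements puts
every `(1, σ''_i)` in `H` as well.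
-/

open Set

namespace Subgroup

variable {G K : Type*} [Group G] [Group K] {H : Subgroup (G × K)}

theorem mk_one_mem_of_coprime {a : G} {b : K} {p q : ℕ} (hpq : p.Coprime q)
    (ha : a ^ p = 1) (hb : b ^ q = 1) (hab : (a, b) ∈ H) : (a, 1) ∈ H := by
  obtain ⟨k, hk₁, hk₀⟩ := Nat.chineseRemainder hpq 1 0
  have hak : a ^ k = a := by
    simpa using pow_eq_pow_iff_modEq.2 (hk₁.of_dvd (orderOf_dvd_of_pow_eq_one ha))
  have hbk : b ^ k = 1 := by
    simpa using pow_eq_pow_iff_modEq.2 (hk₀.of_dvd (orderOf_dvd_of_pow_eq_one hb))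
  simpa [Prod.pow_mk, hak, hbk] using H.pow_mem hab k

theorem mk_one_mem_of_mul_conj_eq {u v : G} {y : K} (hu : (u, 1) ∈ H) (hv : (v, y) ∈ H)
    (huv : u * (v * u * v⁻¹) = v) : (v, 1) ∈ H := by
  simpa [huv] using H.mul_mem hu (H.mul_mem (H.mul_mem hv hu) (H.inv_mem hv))

theorem closure_range_mk_eq_prod {ι : Type*} {f : ι → G} {g : ι → K}
    (hf : ∀ i, (f i, 1) ∈ closure (range fun i => (f i, g i))) :
    closure (range fun i => (f i, g i)) = (closure (range f)).prod (closure (range g)) := by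
  set H := closure (range fun i => (f i, g i))
  have hg : ∀ i, (1, g i) ∈ H := fun i => by
    simpa using H.mul_mem (H.inv_mem (hf i)) (subset_closure ⟨i, rfl⟩)
  refine le_antisymm ?_ (prod_le_iff.2 ⟨?_, ?_⟩)
  · exact (closure_le _).2 <| range_subset_iff.2 fun i =>
      ⟨subset_closure ⟨i, rfl⟩, subset_closure ⟨i, rfl⟩⟩
  · exact map_le_iff_le_comap.2 <| (closure_le _).2 <| range_subset_iff.2 hf
  · exact map_le_iff_le_comap.2 <| (closure_le _).2 <| range_subset_iff.2 hg

end Subgroup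

theorem mul_conj_eq_of_braid {G : Type*} [Group G] {a b c : G}
    (ha : a * a = 1) (hb : b * b = 1) (hc : c * c = 1) (hac : Commute a c)
    (hbc : b * c * b = c * b * c) :
    a * b * (b * c * (a * b) * (b * c)⁻¹) = b * c := by
  have hb' : b⁻¹ = b := inv_eq_of_mul_eq_one_right hb
  have hc' : c⁻¹ = c := inv_eq_of_mul_eq_one_right hc
  calc a * b * (b * c * (a * b) * (b * c)⁻¹)
      = a * (b * b) * c * a * b * c⁻¹ * b⁻¹ := by group
    _ = (a * c) * a * b * c * b := by rw [hb, hb', hc', mul_one]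
    _ = c * (a * a) * b * c * b := by rw [hac.eq]; group
    _ = (c * b * c) * b := by rw [ha, mul_one]
    _ = b * c * (b * b) := by rw [← hbc]; group
    _ = b * c := by rw [hb, mul_one]

namespace CoxeterSystem

section

variable {B W : Type*} [Group W] {M : CoxeterMatrix B} (cs : CoxeterSystem M W)

theorem commute_simple_of_eq_two {i j : B} (h : M i j = 2) :
    Commute (cs.simple i) (cs.simple j) :=
  commute_iff_eq _ _ |>.2 <| by
    simpa [braidWord, h, alternatingWord, wordProd, M.symmetric j i] using
      cs.wordProd_braidWord_eq i j

theorem simple_braid_of_eq_three {i j : B} (h : M i j = 3) :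
    cs.simple i * cs.simple j * cs.simple i = cs.simple j * cs.simple i * cs.simple j := by
  simpa [braidWord, h, alternatingWord, wordProd, M.symmetric j i, mul_assoc] using
    (cs.wordProd_braidWord_eq i j).symm

end

variable {W : Type*} [Group W] {m : ℕ} {M : CoxeterMatrix (Fin (m + 2))}
  (cs : CoxeterSystem M W)

/-- Indexed from `0`: `cs.rotation i` is the paper's `σ_{i+1} = s_{i+1} s_{i+2}`. -/
def rotation (i : Fin (m + 1)) : W := cs.simple i.castSucc * cs.simple i.succ

theorem rotation_pow_eq_one (i : Fin (m + 1)) : cs.rotation i ^ M i.castSucc i.succ = 1 :=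
  cs.simple_mul_simple_pow _ _

theorem rotation_castSucc_mul_conj_eq {i : Fin m} (h₂ : M i.castSucc.castSucc i.succ.succ = 2)
    (h₃ : M i.succ.castSucc i.succ.succ = 3) :
    cs.rotation i.castSucc *
        (cs.rotation i.succ * cs.rotation i.castSucc * (cs.rotation i.succ)⁻¹) =
      cs.rotation i.succ := by
  simp only [rotation, Fin.succ_castSucc]
  exact mul_conj_eq_of_braid (cs.simple_mul_simple_self _) (cs.simple_mul_simple_self _)
    (cs.simple_mul_simple_self _) (cs.commute_simple_of_eq_two h₂)
    (cs.simple_braid_of_eq_three h₃)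

theorem mk_rotation_one_mem {K : Type*} [Group K] {H : Subgroup (W × K)}
    (hM : ∀ i : Fin m, M i.castSucc.castSucc i.succ.succ = 2 ∧ M i.succ.castSucc i.succ.succ = 3)
    (h₀ : (cs.rotation 0, 1) ∈ H) (hH : ∀ i, ∃ y, (cs.rotation i, y) ∈ H) (i : Fin (m + 1)) :
    (cs.rotation i, 1) ∈ H := by
  induction i using Fin.induction with
  | zero => exact h₀
  | succ i ih =>
    obtain ⟨y, hy⟩ := hH i.succ
    exact Subgroup.mk_one_mem_of_mul_conj_eq ih hy
      (cs.rotation_castSucc_mul_conj_eq (hM i).1 (hM i).2)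

end CoxeterSystem

theorem Fin.setOf_exists_val_eq_succ_eq_range {α : Type*} {m : ℕ}
    (F : Fin (m + 1) → Fin (m + 1) → α) :
    {x | ∃ i j : Fin (m + 1), (j : ℕ) = i + 1 ∧ x = F i j} =
      range fun i : Fin m => F i.castSucc i.succ := by
  ext x
  constructor
  · rintro ⟨i, j, hij, rfl⟩
    have hi : (i : ℕ) < m := by omega
    obtain rfl : j = (⟨i, hi⟩ : Fin m).succ := Fin.ext (by simp [hij])
    exact ⟨⟨i, hi⟩, rfl⟩
  · rintro ⟨i, rfl⟩
    exact ⟨i.castSucc, i.succ, by simp, rfl⟩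

/-- For `n ≥ 3`, the subgroup of `W_B × W_C` (cube and cross-polytope Coxeter groups)
generated by the pairs `(σ'_i, σ''_i)` of abstract rotations equals the product of the
rotation subgroups. -/
theorem stmt_14 (n : ℕ) (hn : 3 ≤ n)
    (MB MC : CoxeterMatrix (Fin n))
    (hMB : ∀ i j : Fin n, MB.M i j =
      if i = j then 1
      else if (i : ℕ) + 1 = (j : ℕ) ∨ (j : ℕ) + 1 = (i : ℕ) then
        (if (i : ℕ) = 0 ∨ (j : ℕ) = 0 then 4 else 3)
      else 2)
    (hMC : ∀ i j : Fin n, MC.M i j =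
      if i = j then 1
      else if (i : ℕ) + 1 = (j : ℕ) ∨ (j : ℕ) + 1 = (i : ℕ) then
        (if (i : ℕ) = n - 1 ∨ (j : ℕ) = n - 1 then 4 else 3)
      else 2) :
    Subgroup.closure
        {p : MB.Group × MC.Group |
          ∃ i j : Fin n, (j : ℕ) = (i : ℕ) + 1 ∧
            p = (MB.simple i * MB.simple j, MC.simple i * MC.simple j)} =
      (Subgroup.closure
          {x : MB.Group |
            ∃ i j : Fin n, (j : ℕ) = (i : ℕ) + 1 ∧ x = MB.simple i * MB.simple j}).prod
        (Subgroup.closure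
          {x : MC.Group |
            ∃ i j : Fin n, (j : ℕ) = (i : ℕ) + 1 ∧ x = MC.simple i * MC.simple j}) := by
  obtain ⟨m, rfl⟩ : ∃ m, n = m + 3 := ⟨n - 3, by omega⟩
  simp only [Fin.setOf_exists_val_eq_succ_eq_range]
  apply Subgroup.closure_range_mk_eq_prod (f := MB.toCoxeterSystem.rotation)
    (g := MC.toCoxeterSystem.rotation)
  have hB : ∀ i : Fin (m + 1),
      MB.M i.castSucc.castSucc i.succ.succ = 2 ∧ MB.M i.succ.castSucc i.succ.succ = 3 := by
    intro i
    rw [hMB, hMB]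
    simp only [Fin.ext_iff, Fin.val_castSucc, Fin.val_succ]
    grind
  have h₄ : MB.toCoxeterSystem.rotation 0 ^ 4 = 1 := by
    simpa [hMB] using MB.toCoxeterSystem.rotation_pow_eq_one 0
  have h₃ : MC.toCoxeterSystem.rotation 0 ^ 3 = 1 := by
    simpa [hMC] using MC.toCoxeterSystem.rotation_pow_eq_one 0
  refine MB.toCoxeterSystem.mk_rotation_one_mem hB ?_
    fun i => ⟨_, Subgroup.subset_closure ⟨i, rfl⟩⟩
  exact Subgroup.mk_one_mem_of_coprime (by norm_num) h₄ h₃ (Subgroup.subset_closure ⟨0, rfl⟩)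
end

section
/- Let n ≥ 3. Let W_T, W_B, W_C be the Coxeter groups on n generators of the string Coxeter diagrams with consecutive edge labels (3, …, 3), (4, 3, …, 3), and (3, …, 3, 4) respectively (and m(i,j) = 2 for |i−j| ≥ 2 in each), with generators s_i, s′_i, s″_i. Set σ_i = s_i s_{i+1}, σ′_i = s′_i s′_{i+1}, σ″_i = s″_i s″_{i+1} for i = 1, …, n−1. Then the subgroup of W_T × W_B × W_C generated by the triples (σ_i, σ′_i, σ″_i), i = 1, …, n−1, equals the product subgroup ⟨σ₁, …, σ_{n−1}⟩ × ⟨σ′₁, …, σ′_{n−1}⟩ × ⟨σ″₁, …, σ″_{n−1}⟩. -/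
/-!
Let `G` be generated by the triples `gᵢ = (σᵢ, σ'ᵢ, σ''ᵢ)` and let `K' = {b | (1, b, 1) ∈ G}`,
`K'' = {c | (1, 1, c) ∈ G}`. Since `σ₁` and `σ''₁` have order 3 while `σ'₁` has order 4,
`g₁³ = (1, σ'₁⁻¹, 1)`, so `σ'₁ ∈ K'`. Every `σ'ᵢ` normalizes `K'`, hence so does the involution
`w = s'ᵢ s'ᵢ₊₂ = σ'ᵢ σ'ᵢ₊₁`; as `x = σ'ᵢ₊₁ = σ'ᵢ⁻¹ w` has order 3, `x = (x²)⁻¹` with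
`x² = σ'ᵢ⁻¹ (w σ'ᵢ⁻¹ w⁻¹) ∈ K'`. By induction `K'` contains every `σ'ᵢ`; descending from
`g_{n-1}³ = (1, 1, σ''_{n-1}⁻¹)` the same argument puts every `σ''ᵢ` in `K''`, and finally
`(σᵢ, 1, 1) = gᵢ (1, σ'ᵢ, 1)⁻¹ (1, 1, σ''ᵢ)⁻¹ ∈ G`.
-/

namespace Subgroup

section Chain

variable {W : Type*} [Group W] {K : Subgroup W}

theorem mem_of_pow_succ_eq_one_of_pow_mem {x : W} {k : ℕ} (hx : x ^ (k + 1) = 1)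
    (hk : x ^ k ∈ K) : x ∈ K := by
  rw [pow_succ] at hx
  rw [← inv_eq_of_mul_eq_one_right hx]
  exact inv_mem hk

theorem inv_mul_mem_of_mem_normalizer {u w : W} (hu : u ∈ K) (hw : w ∈ normalizer K)
    (hw2 : w ^ 2 = 1) (h3 : (u⁻¹ * w) ^ 3 = 1) : u⁻¹ * w ∈ K := by
  refine mem_of_pow_succ_eq_one_of_pow_mem h3 ?_
  have hw_inv : w⁻¹ = w := inv_eq_of_mul_eq_one_right (sq w ▸ hw2)
  have hsq : (u⁻¹ * w) ^ 2 = u⁻¹ * (w * u⁻¹ * w⁻¹) := by rw [hw_inv, sq]; simp only [mul_assoc]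
  rw [hsq]
  exact mul_mem (inv_mem hu) ((mem_normalizer_iff.1 hw _).1 (inv_mem hu))

theorem mul_mem_of_chain {m : ℕ} (s : Fin m → W) (hs : ∀ i, s i * s i = 1)
    (hnorm : ∀ i j : Fin m, (j : ℕ) = i + 1 → s i * s j ∈ normalizer K)
    (hcomm : ∀ i j : Fin m, (j : ℕ) = i + 2 → (s i * s j) ^ 2 = 1)
    (hbraid : ∀ i j : Fin m, (j : ℕ) = i + 1 → (i : ℕ) ≠ 0 → (s i * s j) ^ 3 = 1)
    (hbase : ∀ i j : Fin m, (j : ℕ) = i + 1 → (i : ℕ) = 0 → s i * s j ∈ K) :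
    ∀ i j : Fin m, (j : ℕ) = i + 1 → s i * s j ∈ K := by
  suffices h : ∀ k (hk : k + 1 < m), s ⟨k, by omega⟩ * s ⟨k + 1, hk⟩ ∈ K by
    rintro ⟨i, hi⟩ ⟨j, hj⟩ (rfl : j = i + 1)
    exact h i hj
  intro k hk
  induction k with
  | zero => exact hbase _ _ rfl rfl
  | succ k ih =>
    set a := s ⟨k, by omega⟩
    set b := s ⟨k + 1, by omega⟩
    set c := s ⟨k + 2, hk⟩
    have hbc : b * c = (a * b)⁻¹ * (a * c) := by
      rw [mul_inv_rev, inv_eq_of_mul_eq_one_right (hs _), mul_assoc,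
        inv_mul_cancel_left]
    have hac : a * c = (a * b) * (b * c) := by
      rw [mul_assoc, ← mul_assoc b, hs, one_mul]
    rw [hbc]
    refine inv_mul_mem_of_mem_normalizer (ih (by omega)) ?_ (hcomm _ _ rfl) ?_
    · rw [hac]
      exact mul_mem (hnorm _ _ rfl) (hnorm _ _ rfl)
    · rw [← hbc]
      exact hbraid _ _ rfl (by simp)

theorem mul_mem_of_chain_rev {m : ℕ} (s : Fin m → W) (hs : ∀ i, s i * s i = 1)
    (hnorm : ∀ i j : Fin m, (j : ℕ) = i + 1 → s i * s j ∈ normalizer K)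
    (hcomm : ∀ i j : Fin m, (j : ℕ) = i + 2 → (s i * s j) ^ 2 = 1)
    (hbraid : ∀ i j : Fin m, (j : ℕ) = i + 1 → (j : ℕ) ≠ m - 1 → (s i * s j) ^ 3 = 1)
    (hbase : ∀ i j : Fin m, (j : ℕ) = i + 1 → (j : ℕ) = m - 1 → s i * s j ∈ K) :
    ∀ i j : Fin m, (j : ℕ) = i + 1 → s i * s j ∈ K := by
  have hswap : ∀ i j, s i * s j = (s j * s i)⁻¹ := fun i j => by
    rw [mul_inv_rev, inv_eq_of_mul_eq_one_right (hs i), inv_eq_of_mul_eq_one_right (hs j)]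
  intro i j hij
  have h := mul_mem_of_chain (K := K) (s ∘ Fin.rev) (fun _ => hs _) ?_ ?_ ?_ ?_ j.rev i.rev
    (by simp only [Fin.val_rev]; omega)
  · simp only [Function.comp_apply, Fin.rev_rev] at h
    rw [hswap]
    exact inv_mem h
  all_goals intro i j h; simp only [Function.comp_apply]; rw [hswap]
  · exact inv_mem (hnorm _ _ (by simp only [Fin.val_rev]; omega))
  · rw [inv_pow, hcomm _ _ (by simp only [Fin.val_rev]; omega), inv_one]
  · intro hi
    rw [inv_pow, hbraid _ _ (by simp only [Fin.val_rev]; omega)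
      (by simp only [Fin.val_rev]; omega), inv_one]
  · intro hi
    exact inv_mem (hbase _ _ (by simp only [Fin.val_rev]; omega)
      (by simp only [Fin.val_rev]; omega))

end Chain

section Goursat

variable {M N : Type*} [Group M] [Group N] {I : Subgroup (M × N)} {x : M × N}

theorem fst_mem_normalizer_goursatFst (hx : x ∈ normalizer I) :
    x.1 ∈ normalizer I.goursatFst := by
  refine mem_normalizer_iff.2 fun g => ?_
  obtain ⟨x₁, x₂⟩ := x
  simpa [mem_goursatFst] using mem_normalizer_iff.1 hx (g, 1)

theorem snd_mem_normalizer_goursatSnd (hx : x ∈ normalizer I) :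
    x.2 ∈ normalizer I.goursatSnd := by
  refine mem_normalizer_iff.2 fun g => ?_
  obtain ⟨x₁, x₂⟩ := x
  simpa [mem_goursatSnd] using mem_normalizer_iff.1 hx (1, g)

end Goursat

section Triple

variable {A B C : Type*} [Group A] [Group B] [Group C] {G : Subgroup (A × B × C)}
  {a : A} {b : B} {c : C} {k : ℕ}

theorem pow_mem_goursatSnd_goursatFst (h : (a, b, c) ∈ G) (ha : a ^ k = 1) (hc : c ^ k = 1) :
    b ^ k ∈ G.goursatSnd.goursatFst := by
  simpa [ha, hc] using pow_mem h k

theorem pow_mem_goursatSnd_goursatSnd (h : (a, b, c) ∈ G) (ha : a ^ k = 1) (hb : b ^ k = 1) :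
    c ^ k ∈ G.goursatSnd.goursatSnd := by
  simpa [ha, hb] using pow_mem h k

end Triple

theorem closure_triples_eq_prod {A B C ι : Type*} [Group A] [Group B] [Group C]
    (R : ι → ι → Prop) (a : ι → ι → A) (b : ι → ι → B) (c : ι → ι → C)
    (hmid : ∀ G : Subgroup (A × B × C), (∀ i j, R i j → (a i j, b i j, c i j) ∈ G) →
      ∀ i j, R i j → b i j ∈ G.goursatSnd.goursatFst)
    (hlast : ∀ G : Subgroup (A × B × C), (∀ i j, R i j → (a i j, b i j, c i j) ∈ G) →
      ∀ i j, R i j → c i j ∈ G.goursatSnd.goursatSnd) :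
    closure {p | ∃ i j, R i j ∧ p = (a i j, b i j, c i j)} =
      (closure {x | ∃ i j, R i j ∧ x = a i j}).prod
        ((closure {x | ∃ i j, R i j ∧ x = b i j}).prod
          (closure {x | ∃ i j, R i j ∧ x = c i j})) := by
  set G := closure {p | ∃ i j, R i j ∧ p = (a i j, b i j, c i j)}
  have hgen : ∀ i j, R i j → (a i j, b i j, c i j) ∈ G :=
    fun i j h => subset_closure ⟨i, j, h, rfl⟩
  have hfst : ∀ i j, R i j → a i j ∈ G.goursatFst := fun i j h => by
    have hb := mem_goursatFst.1 (hmid G hgen i j h)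
    have hc := mem_goursatSnd.1 (hlast G hgen i j h)
    have ha : (a i j, (1 : B), (1 : C)) ∈ G := by
      simpa using mul_mem (mul_mem (hgen i j h) (inv_mem (mem_goursatSnd.1 hb)))
        (inv_mem (mem_goursatSnd.1 hc))
    exact mem_goursatFst.2 ha
  apply le_antisymm
  · rw [closure_le]
    rintro _ ⟨i, j, h, rfl⟩
    exact ⟨subset_closure ⟨i, j, h, rfl⟩, subset_closure ⟨i, j, h, rfl⟩,
      subset_closure ⟨i, j, h, rfl⟩⟩
  · refine (prod_mono ?_ ((prod_mono ?_ ?_).trans (goursatFst_prod_goursatSnd_le _))).trans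
      (goursatFst_prod_goursatSnd_le G) <;> refine (closure_le _).2 ?_ <;> rintro _ ⟨i, j, h, rfl⟩
    exacts [hfst i j h, hmid G hgen i j h, hlast G hgen i j h]

end Subgroup

theorem CoxeterMatrix.simple_mul_simple_pow_of_eq_s15 {B : Type*} (M : CoxeterMatrix B) {i j : B}
    {m : ℕ} (h : M i j = m) : (M.simple i * M.simple j) ^ m = 1 :=
  h ▸ M.toCoxeterSystem.simple_mul_simple_pow i j

/-- For `n ≥ 3`, the subgroup of `W_T × W_B × W_C` generated by the triples
`(σ_i, σ'_i, σ''_i)` of abstract rotations equals the product of the three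
rotation subgroups. -/
theorem stmt_15 (n : ℕ) (hn : 3 ≤ n)
    (MT MB MC : CoxeterMatrix (Fin n))
    (hMT : ∀ i j : Fin n, MT.M i j =
      if i = j then 1
      else if (i : ℕ) + 1 = (j : ℕ) ∨ (j : ℕ) + 1 = (i : ℕ) then 3 else 2)
    (hMB : ∀ i j : Fin n, MB.M i j =
      if i = j then 1
      else if (i : ℕ) + 1 = (j : ℕ) ∨ (j : ℕ) + 1 = (i : ℕ) then
        (if (i : ℕ) = 0 ∨ (j : ℕ) = 0 then 4 else 3)
      else 2)
    (hMC : ∀ i j : Fin n, MC.M i j =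
      if i = j then 1
      else if (i : ℕ) + 1 = (j : ℕ) ∨ (j : ℕ) + 1 = (i : ℕ) then
        (if (i : ℕ) = n - 1 ∨ (j : ℕ) = n - 1 then 4 else 3)
      else 2) :
    Subgroup.closure
        {p : MT.Group × MB.Group × MC.Group |
          ∃ i j : Fin n, (j : ℕ) = (i : ℕ) + 1 ∧
            p = (MT.simple i * MT.simple j,
                 MB.simple i * MB.simple j,
                 MC.simple i * MC.simple j)} =
      (Subgroup.closure
          {x : MT.Group |
            ∃ i j : Fin n, (j : ℕ) = (i : ℕ) + 1 ∧ x = MT.simple i * MT.simple j}).prod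
        ((Subgroup.closure
            {x : MB.Group |
              ∃ i j : Fin n, (j : ℕ) = (i : ℕ) + 1 ∧ x = MB.simple i * MB.simple j}).prod
          (Subgroup.closure
            {x : MC.Group |
              ∃ i j : Fin n, (j : ℕ) = (i : ℕ) + 1 ∧ x = MC.simple i * MC.simple j})) := by
  have hT : ∀ i j : Fin n, (j : ℕ) = i + 1 → (MT.simple i * MT.simple j) ^ 3 = 1 :=
    fun i j h => MT.simple_mul_simple_pow_of_eq_s15 (by rw [hMT]; split_ifs <;> omega)
  refine Subgroup.closure_triples_eq_prod _ _ _ _ (fun G hG => ?_) (fun G hG => ?_)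
  · refine Subgroup.mul_mem_of_chain MB.simple MB.toCoxeterSystem.simple_mul_simple_self
      (fun i j h => Subgroup.fst_mem_normalizer_goursatFst
        (Subgroup.snd_mem_normalizer_goursatSnd (G.le_normalizer (hG i j h))))
      (fun i j h => MB.simple_mul_simple_pow_of_eq_s15 (by rw [hMB]; split_ifs <;> omega))
      (fun i j h hi => MB.simple_mul_simple_pow_of_eq_s15 (by rw [hMB]; split_ifs <;> omega))
      (fun i j h hi => Subgroup.mem_of_pow_succ_eq_one_of_pow_mem (k := 3)
        (MB.simple_mul_simple_pow_of_eq_s15 (by rw [hMB]; split_ifs <;> omega))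
        (Subgroup.pow_mem_goursatSnd_goursatFst (hG i j h) (hT i j h)
          (MC.simple_mul_simple_pow_of_eq_s15 (by rw [hMC]; split_ifs <;> omega))))
  · refine Subgroup.mul_mem_of_chain_rev MC.simple MC.toCoxeterSystem.simple_mul_simple_self
      (fun i j h => Subgroup.snd_mem_normalizer_goursatSnd
        (Subgroup.snd_mem_normalizer_goursatSnd (G.le_normalizer (hG i j h))))
      (fun i j h => MC.simple_mul_simple_pow_of_eq_s15 (by rw [hMC]; split_ifs <;> omega))
      (fun i j h hj => MC.simple_mul_simple_pow_of_eq_s15 (by rw [hMC]; split_ifs <;> omega))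
      (fun i j h hj => Subgroup.mem_of_pow_succ_eq_one_of_pow_mem (k := 3)
        (MC.simple_mul_simple_pow_of_eq_s15 (by rw [hMC]; split_ifs <;> omega))
        (Subgroup.pow_mem_goursatSnd_goursatSnd (hG i j h) (hT i j h)
          (MB.simple_mul_simple_pow_of_eq_s15 (by rw [hMB]; split_ifs <;> omega))))
end
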